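/- arXiv:1108.4709 — 3 statements merged into one kernel-verified Lean document; each statement's English description precedes it below -/
import Mathlib

section
/- Let M1, M3 be positive integers and let r, L be reals with 0 < r < L. Then inf{ M1·a + M3·b : a ≥ 0, b ≥ 0, r/max(1−a, 0) + r/max(1−b, 0) > L } = min(M1, M3) · max(1 − 2r/L, 0) / (1 − r/L), where the convention r/0 = +∞ is used in the constraint. (Corollary, part (1): the closed-form DMDT of the VBL ARQ protocol for an (M1, 1, M3) MIMO multihop network under the long-term static channel assumption, equal to min{M1,M3}·(1−2r/L)/(1−r/L) for 0 ≤ r ≤ L/2 and 0 otherwise.) -/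
private lemma VBL_constraint_iff (r L a b : ℝ) (hr : 0 < r) (ha : a < 1) (hb : b < 1) :
    (ENNReal.ofReal r / ENNReal.ofReal (max (1 - a) 0)
      + ENNReal.ofReal r / ENNReal.ofReal (max (1 - b) 0) > ENNReal.ofReal L)
    ↔ L < r / (1 - a) + r / (1 - b) := by
  have ha' : (0:ℝ) < 1 - a := by linarith
  have hb' : (0:ℝ) < 1 - b := by linarith
  rw [max_eq_left ha'.le, max_eq_left hb'.le,
      ← ENNReal.ofReal_div_of_pos ha', ← ENNReal.ofReal_div_of_pos hb',
      ← ENNReal.ofReal_add (by positivity) (by positivity)]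
  exact ENNReal.ofReal_lt_ofReal_iff (by positivity)

set_option maxHeartbeats 1600000 in
/-- **Corollary, part (1)**: the closed-form DMDT of the VBL ARQ protocol for an
`(M1, 1, M3)` MIMO multihop network under the long-term static channel assumption.
For `0 < r < L`,
`inf { M1·a + M3·b : a, b ≥ 0, r/(1-a)⁺ + r/(1-b)⁺ > L } = min(M1,M3)·(1-2r/L)⁺/(1-r/L)`,
where the convention `r/0 = +∞` in the constraint is implemented via `ℝ≥0∞`-valued
division. -/
theorem VBL_DMDT_M1_1_M3_closedForm
    (M1 M3 : ℕ) (hM1 : 0 < M1) (hM3 : 0 < M3)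
    (r L : ℝ) (hr : 0 < r) (hrL : r < L) :
    sInf {x : ℝ | ∃ a b : ℝ, 0 ≤ a ∧ 0 ≤ b ∧
        ENNReal.ofReal r / ENNReal.ofReal (max (1 - a) 0)
          + ENNReal.ofReal r / ENNReal.ofReal (max (1 - b) 0) > ENNReal.ofReal L ∧
        x = (M1 : ℝ) * a + (M3 : ℝ) * b}
      = (min (M1 : ℝ) (M3 : ℝ)) * max (1 - 2 * r / L) 0 / (1 - r / L) := by
  have hL : 0 < L := hr.trans hrL
  have hLr : 0 < L - r := by linarith
  have hM1' : (1:ℝ) ≤ (M1:ℝ) := by exact_mod_cast hM1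
  have hM3' : (1:ℝ) ≤ (M3:ℝ) := by exact_mod_cast hM3
  set S : Set ℝ := {x : ℝ | ∃ a b : ℝ, 0 ≤ a ∧ 0 ≤ b ∧
        ENNReal.ofReal r / ENNReal.ofReal (max (1 - a) 0)
          + ENNReal.ofReal r / ENNReal.ofReal (max (1 - b) 0) > ENNReal.ofReal L ∧
        x = (M1 : ℝ) * a + (M3 : ℝ) * b} with hS
  set c : ℝ := (L - 2*r)/(L - r) with hc
  have hc1 : c < 1 := by rw [hc, div_lt_one hLr]; linarith
  set a₀ : ℝ := max c 0 with ha₀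
  have ha₀0 : 0 ≤ a₀ := le_max_right _ _
  have ha₀1 : a₀ < 1 := max_lt hc1 one_pos
  have ha₀c : c ≤ a₀ := le_max_left _ _
  have hm1 : (1:ℝ) ≤ min (M1:ℝ) (M3:ℝ) := le_min hM1' hM3'
  have hm0 : (0:ℝ) < min (M1:ℝ) (M3:ℝ) := lt_of_lt_of_le one_pos hm1
  -- rewrite the RHS
  have hRHS : (min (M1 : ℝ) (M3 : ℝ)) * max (1 - 2 * r / L) 0 / (1 - r / L)
      = min (M1:ℝ) (M3:ℝ) * a₀ := by
    have h1 : (1 - 2 * r / L) = (L - 2*r)/L := by field_simp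
    have h2 : (1 - r / L) = (L - r)/L := by field_simp
    rw [h1, h2, ha₀, hc]
    rcases le_or_gt (L - 2*r) 0 with h | h
    · rw [max_eq_right (div_nonpos_of_nonpos_of_nonneg h hL.le),
        max_eq_right (div_nonpos_of_nonpos_of_nonneg h hLr.le)]
      simp
    · rw [max_eq_left (le_of_lt (div_pos h hL)),
        max_eq_left (le_of_lt (div_pos h hLr))]
      field_simp
  -- lower bound
  have hlb : ∀ x ∈ S, min (M1:ℝ) (M3:ℝ) * a₀ ≤ x := by
    rintro x ⟨a, b, ha, hb, hcon, rfl⟩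
    have hminM1 : min (M1:ℝ) (M3:ℝ) ≤ (M1:ℝ) := min_le_left _ _
    have hminM3 : min (M1:ℝ) (M3:ℝ) ≤ (M3:ℝ) := min_le_right _ _
    by_cases h1 : 1 ≤ a
    · nlinarith [mul_nonneg (by positivity : (0:ℝ) ≤ (M3:ℝ)) hb,
        mul_nonneg (by positivity : (0:ℝ) ≤ (M1:ℝ)) (by linarith : (0:ℝ) ≤ a - 1),
        ha₀1.le, ha₀0]
    by_cases h2 : 1 ≤ b
    · nlinarith [mul_nonneg (by positivity : (0:ℝ) ≤ (M1:ℝ)) ha,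
        mul_nonneg (by positivity : (0:ℝ) ≤ (M3:ℝ)) (by linarith : (0:ℝ) ≤ b - 1),
        ha₀1.le, ha₀0]
    push_neg at h1 h2
    rw [VBL_constraint_iff r L a b hr h1 h2] at hcon
    have ha' : (0:ℝ) < 1 - a := by linarith
    have hb' : (0:ℝ) < 1 - b := by linarith
    have key : L * ((1-a)*(1-b)) < r*(1-b) + r*(1-a) := by
      have h := mul_lt_mul_of_pos_right hcon (mul_pos ha' hb')
      have heq : (r/(1-a) + r/(1-b)) * ((1-a)*(1-b)) = r*(1-b) + r*(1-a) := by
        field_simp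
      rw [heq] at h
      linarith
    have hsum : c < a + b := by
      rw [hc, div_lt_iff₀ hLr]
      nlinarith [mul_nonneg ha hb]
    have hsum' : a₀ ≤ a + b := max_le hsum.le (by linarith)
    have step1 : min (M1:ℝ) (M3:ℝ) * a₀ ≤ min (M1:ℝ) (M3:ℝ) * (a + b) :=
      mul_le_mul_of_nonneg_left hsum' hm0.le
    have step2 : min (M1:ℝ) (M3:ℝ) * a ≤ (M1:ℝ) * a := mul_le_mul_of_nonneg_right hminM1 ha
    have step3 : min (M1:ℝ) (M3:ℝ) * b ≤ (M3:ℝ) * b := mul_le_mul_of_nonneg_right hminM3 hb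
    nlinarith
  have hBdd : BddBelow S := ⟨min (M1:ℝ) (M3:ℝ) * a₀, fun x hx => hlb x hx⟩
  -- membership helper
  have hcval : (L - r) * c = L - 2*r := by
    rw [hc]; field_simp
  have hmem : ∀ δ : ℝ, 0 < δ → a₀ + δ < 1 →
      ((M1:ℝ) * (a₀ + δ) + (M3:ℝ) * 0) ∈ S ∧ ((M1:ℝ) * 0 + (M3:ℝ) * (a₀ + δ)) ∈ S := by
    intro δ hδ0 hδ1
    have hfeas : L < r / (1 - (a₀ + δ)) + r / (1 - 0) := by
      have h1a : (0:ℝ) < 1 - (a₀ + δ) := by linarith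
      have hkey : (L - r) * (1 - (a₀ + δ)) < r := by nlinarith
      have : L - r < r / (1 - (a₀ + δ)) := (lt_div_iff₀ h1a).mpr hkey
      have hr1 : r / (1 - (0:ℝ)) = r := by norm_num
      rw [hr1]
      linarith
    have hfeas' : L < r / (1 - 0) + r / (1 - (a₀ + δ)) := by
      rw [add_comm] at hfeas; exact hfeas
    have hc1' : ENNReal.ofReal r / ENNReal.ofReal (max (1 - (a₀ + δ)) 0)
          + ENNReal.ofReal r / ENNReal.ofReal (max (1 - (0:ℝ)) 0) > ENNReal.ofReal L :=
      (VBL_constraint_iff r L (a₀ + δ) 0 hr (by linarith) (by norm_num)).mpr hfeas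
    have hc2' : ENNReal.ofReal r / ENNReal.ofReal (max (1 - (0:ℝ)) 0)
          + ENNReal.ofReal r / ENNReal.ofReal (max (1 - (a₀ + δ)) 0) > ENNReal.ofReal L :=
      (VBL_constraint_iff r L 0 (a₀ + δ) hr (by norm_num) (by linarith)).mpr hfeas'
    constructor
    · rw [hS]
      exact ⟨a₀ + δ, 0, by linarith, le_refl 0, hc1', rfl⟩
    · rw [hS]
      exact ⟨0, a₀ + δ, le_refl 0, by linarith, hc2', rfl⟩
  have hne : S.Nonempty := by
    obtain ⟨h, _⟩ := hmem ((1 - a₀)/2) (by linarith) (by linarith)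
    exact ⟨_, h⟩
  rw [hRHS]
  apply le_antisymm
  · apply le_of_forall_pos_le_add
    intro ε hε
    have hsumM : (0:ℝ) < (M1:ℝ) + (M3:ℝ) := by linarith
    set δ : ℝ := min (ε / ((M1:ℝ) + (M3:ℝ))) ((1 - a₀)/2) with hδ
    have hδ0 : 0 < δ := lt_min (by positivity) (by linarith)
    have hδ1 : a₀ + δ < 1 := by
      have := min_le_right (ε / ((M1:ℝ) + (M3:ℝ))) ((1 - a₀)/2)
      have : δ ≤ (1 - a₀)/2 := this
      linarith
    have hδε : δ * ((M1:ℝ) + (M3:ℝ)) ≤ ε :=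
      (le_div_iff₀ hsumM).mp (min_le_left _ _)
    obtain ⟨hmA, hmB⟩ := hmem δ hδ0 hδ1
    rcases le_total (M1:ℝ) (M3:ℝ) with h | h
    · have hle := csInf_le hBdd hmA
      have hmin : min (M1:ℝ) (M3:ℝ) = (M1:ℝ) := min_eq_left h
      rw [hmin]
      nlinarith [mul_nonneg hδ0.le (by positivity : (0:ℝ) ≤ (M3:ℝ))]
    · have hle := csInf_le hBdd hmB
      have hmin : min (M1:ℝ) (M3:ℝ) = (M3:ℝ) := min_eq_right h
      rw [hmin]
      nlinarith [mul_nonneg hδ0.le (by positivity : (0:ℝ) ≤ (M1:ℝ))]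
  · exact le_csInf hne hlb
end

section
/- Let M be a positive integer and let r, L be reals with 0 < r < L. Then inf{ M·a + M·b : a ≥ 0, b ≥ 0, r/max(1−a, 0) + r/max(1−b, 0) > L } = M · max(1 − 2r/L, 0) / (1 − r/L), where the convention r/0 = +∞ is used in the constraint. (Corollary, part (2): the closed-form DMDT of the VBL ARQ protocol for a (1, M, 1) MIMO multihop network under the long-term static channel assumption, equal to M·(1−2r/L)/(1−r/L) for 0 ≤ r ≤ L/2 and 0 otherwise.) -/
/-!
Write `c = (L - 2r)⁺ / (L - r)`, which equals the right-hand side divided by `M`. The infimum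
scales with `M ≥ 0`, so it suffices to show that the feasible values of `a + b` lie in `[c, ∞)`
and contain `(c, ∞)`. If `a, b < 1`, put `u = 1 - a`, `v = 1 - b`; the constraint reads
`r (u + v) > L u v`, whence `(L - r)(a + b) - (L - 2r) > L a b ≥ 0`. Conversely `(0, s)` is
feasible for every `s > c`: for `s ≥ 1` the second term is `+∞`, and for `s < 1` the constraint
`r + r / (1 - s) > L` is equivalent to `(L - r) s > L - 2r`.
-/

open Set ENNReal Pointwise

/-- The constraint of the statement; `ℝ≥0∞`-valued division gives `r / 0 = ∞` for `r > 0`. -/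
def VBLOutage (r L a b : ℝ) : Prop :=
  ENNReal.ofReal L <
    ENNReal.ofReal r / ENNReal.ofReal (max (1 - a) 0) +
      ENNReal.ofReal r / ENNReal.ofReal (max (1 - b) 0)

theorem csInf_eq_of_Ioi_subset_of_subset_Ici {α : Type*} [ConditionallyCompleteLinearOrder α]
    [DenselyOrdered α] [NoMaxOrder α] {s : Set α} {c : α} (hIoi : Ioi c ⊆ s) (hIci : s ⊆ Ici c) :
    sInf s = c :=
  le_antisymm (csInf_Ioi (a := c) ▸ csInf_le_csInf ⟨c, hIci⟩ nonempty_Ioi hIoi)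
    (le_csInf (nonempty_Ioi.mono hIoi) hIci)

theorem ENNReal.ofReal_div_ofReal_max_one_sub_of_lt {r t : ℝ} (ht : t < 1) :
    ENNReal.ofReal r / ENNReal.ofReal (max (1 - t) 0) = ENNReal.ofReal (r / (1 - t)) := by
  rw [max_eq_left (by linarith), ENNReal.ofReal_div_of_pos (by linarith)]

theorem ENNReal.ofReal_div_ofReal_max_one_sub_of_one_le {r t : ℝ} (hr : 0 < r) (ht : 1 ≤ t) :
    ENNReal.ofReal r / ENNReal.ofReal (max (1 - t) 0) = ⊤ := by
  rw [max_eq_right (by linarith), ENNReal.ofReal_zero]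
  exact ENNReal.div_zero (ENNReal.ofReal_pos.2 hr).ne'

section VBLOutage

variable {r L a b : ℝ}

theorem vblOutage_iff_of_lt_one (hr : 0 < r) (ha : a < 1) (hb : b < 1) :
    VBLOutage r L a b ↔ L < r / (1 - a) + r / (1 - b) := by
  have hra : 0 < r / (1 - a) := div_pos hr (by linarith)
  have hrb : 0 < r / (1 - b) := div_pos hr (by linarith)
  rw [VBLOutage, ENNReal.ofReal_div_ofReal_max_one_sub_of_lt ha,
    ENNReal.ofReal_div_ofReal_max_one_sub_of_lt hb, ← ENNReal.ofReal_add hra.le hrb.le,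
    ENNReal.ofReal_lt_ofReal_iff (add_pos hra hrb)]

theorem vblOutage_of_one_le_right (hr : 0 < r) (hb : 1 ≤ b) : VBLOutage r L a b := by
  rw [VBLOutage, ENNReal.ofReal_div_ofReal_max_one_sub_of_one_le hr hb, add_top]
  exact ofReal_lt_top

theorem div_le_add_of_vblOutage (hr : 0 < r) (hrL : r < L) (ha : 0 ≤ a) (hb : 0 ≤ b)
    (h : VBLOutage r L a b) : max (L - 2 * r) 0 / (L - r) ≤ a + b := by
  have hLr : 0 < L - r := by linarith
  by_cases hab : a < 1 ∧ b < 1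
  · obtain ⟨ha1, hb1⟩ := hab
    have hu : 0 < 1 - a := by linarith
    have hv : 0 < 1 - b := by linarith
    rw [vblOutage_iff_of_lt_one hr ha1 hb1, div_add_div _ _ hu.ne' hv.ne',
      lt_div_iff₀ (mul_pos hu hv)] at h
    rw [div_le_iff₀ hLr]
    exact max_le (by nlinarith [mul_nonneg ha hb]) (by positivity)
  · have : 1 ≤ a + b := by
      rcases not_and_or.1 hab with h | h <;> linarith [not_lt.1 h]
    calc max (L - 2 * r) 0 / (L - r) ≤ 1 :=
          (div_le_one hLr).2 (max_le (by linarith) hLr.le)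
      _ ≤ a + b := this

theorem vblOutage_zero_of_div_lt (hr : 0 < r) (hrL : r < L) {s : ℝ}
    (hs : max (L - 2 * r) 0 / (L - r) < s) : VBLOutage r L 0 s := by
  rcases lt_or_ge s 1 with hs1 | hs1
  · have hLr : 0 < L - r := by linarith
    have hv : 0 < 1 - s := by linarith
    rw [vblOutage_iff_of_lt_one hr zero_lt_one hs1, sub_zero, div_one,
      ← sub_lt_iff_lt_add', lt_div_iff₀ hv]
    rw [div_lt_iff₀ hLr] at hs
    nlinarith [le_max_left (L - 2 * r) 0]
  · exact vblOutage_of_one_le_right hr hs1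

theorem sInf_add_of_vblOutage (hr : 0 < r) (hrL : r < L) :
    sInf {s : ℝ | ∃ a b : ℝ, 0 ≤ a ∧ 0 ≤ b ∧ VBLOutage r L a b ∧ s = a + b} =
      max (L - 2 * r) 0 / (L - r) := by
  refine csInf_eq_of_Ioi_subset_of_subset_Ici (fun s hs ↦ ?_) ?_
  · have hs0 : 0 ≤ s := le_trans (div_nonneg (le_max_right _ _) (by linarith)) hs.le
    exact ⟨0, s, le_rfl, hs0, vblOutage_zero_of_div_lt hr hrL hs, (zero_add s).symm⟩
  · rintro _ ⟨a, b, ha, hb, h, rfl⟩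
    exact div_le_add_of_vblOutage hr hrL ha hb h

end VBLOutage

theorem max_one_sub_two_mul_div_div_one_sub_div {r L : ℝ} (hL : 0 < L) :
    max (1 - 2 * r / L) 0 / (1 - r / L) = max (L - 2 * r) 0 / (L - r) := by
  rw [one_sub_div hL.ne', one_sub_div hL.ne', ← zero_div L, max_div_div_right hL.le,
    zero_div, div_div_div_cancel_right₀ hL.ne']

theorem VBL_DMDT_1_M_1_closedForm_general
    (M : ℕ)
    (r L : ℝ) (hr : 0 < r) (hrL : r < L) :
    sInf {x : ℝ | ∃ a b : ℝ, 0 ≤ a ∧ 0 ≤ b ∧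
        ENNReal.ofReal r / ENNReal.ofReal (max (1 - a) 0)
          + ENNReal.ofReal r / ENNReal.ofReal (max (1 - b) 0) > ENNReal.ofReal L ∧
        x = (M : ℝ) * a + (M : ℝ) * b}
      = (M : ℝ) * max (1 - 2 * r / L) 0 / (1 - r / L) := by
  have hS : {x : ℝ | ∃ a b : ℝ, 0 ≤ a ∧ 0 ≤ b ∧
        ENNReal.ofReal r / ENNReal.ofReal (max (1 - a) 0)
          + ENNReal.ofReal r / ENNReal.ofReal (max (1 - b) 0) > ENNReal.ofReal L ∧
        x = (M : ℝ) * a + (M : ℝ) * b} =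
      (M : ℝ) • {s : ℝ | ∃ a b : ℝ, 0 ≤ a ∧ 0 ≤ b ∧ VBLOutage r L a b ∧ s = a + b} := by
    ext x
    simp only [mem_smul_set, smul_eq_mul, VBLOutage, gt_iff_lt]
    constructor
    · rintro ⟨a, b, ha, hb, h, rfl⟩
      exact ⟨a + b, ⟨a, b, ha, hb, h, rfl⟩, mul_add _ _ _⟩
    · rintro ⟨_, ⟨a, b, ha, hb, h, rfl⟩, rfl⟩
      exact ⟨a, b, ha, hb, h, mul_add _ _ _⟩
  rw [hS, Real.sInf_smul_of_nonneg M.cast_nonneg, sInf_add_of_vblOutage hr hrL, smul_eq_mul,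
    mul_div_assoc, max_one_sub_two_mul_div_div_one_sub_div (hr.trans hrL)]

/-- **Corollary, part (2)**: the closed-form DMDT of the VBL ARQ protocol for a
`(1, M, 1)` MIMO multihop network under the long-term static channel assumption.
For `0 < r < L`,
`inf { M·a + M·b : a, b ≥ 0, r/(1-a)⁺ + r/(1-b)⁺ > L } = M·(1-2r/L)⁺/(1-r/L)`,
where the convention `r/0 = +∞` in the constraint is implemented via `ℝ≥0∞`-valued
division. -/
theorem VBL_DMDT_1_M_1_closedForm
    (M : ℕ) (hM : 0 < M)
    (r L : ℝ) (hr : 0 < r) (hrL : r < L) :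
    sInf {x : ℝ | ∃ a b : ℝ, 0 ≤ a ∧ 0 ≤ b ∧
        ENNReal.ofReal r / ENNReal.ofReal (max (1 - a) 0)
          + ENNReal.ofReal r / ENNReal.ofReal (max (1 - b) 0) > ENNReal.ofReal L ∧
        x = (M : ℝ) * a + (M : ℝ) * b}
      = (M : ℝ) * max (1 - 2 * r / L) 0 / (1 - r / L) :=
  VBL_DMDT_1_M_1_closedForm_general M r L hr hrL
end

section
/- Let m ≥ 1 and n ≥ 1 be integers. Let (A_k)_{k≥1} and, for i = 1, ..., m+1, (S_k^i)_{k≥1} be sequences of real numbers. Define τ^1_{l,p} = Σ_{k=l}^{p} A_k (with empty sums equal to 0), and recursively for i = 1, ..., m: D_0^i = 0; D_p^i = max over j ∈ {1,...,p} of ( Σ_{k=j}^{p} (S_k^i + S_k^{i+1}) − τ^i_{j+1,p} ) for p ≥ 1; and τ^{i+1}_{l,p} = τ^i_{l,p} + D_p^i − D_{l−1}^i for 2 ≤ l ≤ p+1. Then Σ_{i=1}^{m} D_n^i = max over integer tuples 1 ≤ j_1 ≤ j_2 ≤ ... ≤ j_m ≤ j_{m+1} = n of [ Σ_{i=1}^{m}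 ( Σ_{k=j_i}^{j_{i+1}} (S_k^i + S_k^{i+1}) ) − Σ_{k=j_1+1}^{n} A_k ]. -/
/-!
Telescoping the recursion for `τ` back to the source gives
`τ (i + 1) (j + 1) p = ∑_{k=j+1}^p A k + ∑_{r ≤ i} (D r p - D r j)`, so Lindley's formula at
node `i + 1` says that the cumulative sojourn time `∑_{r ≤ i + 1} D r p` is the maximum over `j`
of `∑_{r ≤ i} D r j` plus the weight of the last stage from `j` to `p`. This is the Bellman
recursion of a longest-path problem over breakpoint tuples `j₀ ≤ ⋯ ≤ j_{i+1} = p`, and its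
value is the maximum in the statement.
-/

open Finset

def admissibleTuples (m p : ℕ) : Set (Fin (m + 1) → ℕ) :=
  {j | Monotone j ∧ 1 ≤ j 0 ∧ j (Fin.last m) = p}

section PathWeight

variable (S : ℕ → ℕ → ℝ) (A : ℕ → ℝ)

noncomputable def pathWeight (m p : ℕ) (j : Fin (m + 1) → ℕ) : ℝ :=
  (∑ i : Fin m, ∑ k ∈ Icc (j i.castSucc) (j i.succ), (S (i.val + 1) k + S (i.val + 2) k))
    - ∑ k ∈ Icc (j 0 + 1) p, A k

noncomputable def stageWeight (i j p : ℕ) : ℝ :=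
  (∑ k ∈ Icc j p, (S i k + S (i + 1) k)) - ∑ k ∈ Icc (j + 1) p, A k

variable {S A}

lemma snoc_mem_admissibleTuples {m j p : ℕ} {t : Fin (m + 1) → ℕ}
    (ht : t ∈ admissibleTuples m j) (hjp : j ≤ p) :
    (Fin.snoc t p : Fin (m + 2) → ℕ) ∈ admissibleTuples (m + 1) p := by
  obtain ⟨hmono, h0, hlast⟩ := ht
  refine ⟨Fin.monotone_iff_le_succ.mpr fun i => ?_, ?_, Fin.snoc_last _ _⟩
  · induction i using Fin.lastCases with
    | last => rwa [Fin.snoc_castSucc, Fin.succ_last, Fin.snoc_last, hlast]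
    | cast i =>
      rw [Fin.succ_castSucc, Fin.snoc_castSucc, Fin.snoc_castSucc]
      exact hmono (Fin.castSucc_le_succ i)
  · rwa [← Fin.castSucc_zero, Fin.snoc_castSucc]

lemma init_mem_admissibleTuples {m p : ℕ} {t : Fin (m + 2) → ℕ}
    (ht : t ∈ admissibleTuples (m + 1) p) :
    Fin.init t ∈ admissibleTuples m (t (Fin.last m).castSucc) :=
  ⟨ht.1.comp Fin.strictMono_castSucc.monotone, ht.2.1, rfl⟩

lemma pathWeight_snoc {m j p : ℕ} {t : Fin (m + 1) → ℕ}
    (ht : t ∈ admissibleTuples m j) (hjp : j ≤ p) :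
    pathWeight S A (m + 1) p (Fin.snoc t p) =
      pathWeight S A m j t + stageWeight S A (m + 1) j p := by
  obtain ⟨hmono, -, hlast⟩ := ht
  have hA : ∑ k ∈ Icc (t 0 + 1) p, A k
      = ∑ k ∈ Icc (t 0 + 1) j, A k + ∑ k ∈ Icc (j + 1) p, A k := by
    simp only [Icc_add_one_left_eq_Ioc]
    exact (sum_Ioc_consecutive A (hlast ▸ hmono (Fin.zero_le _)) hjp).symm
  simp only [pathWeight, stageWeight, Fin.sum_univ_castSucc, Fin.succ_castSucc,
    Fin.snoc_castSucc, Fin.succ_last, Fin.snoc_last, Fin.val_castSucc, Fin.val_last, hlast]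
  rw [← Fin.castSucc_zero, Fin.snoc_castSucc, hA]
  ring

lemma isGreatest_pathWeight_zero {p : ℕ} (hp : 1 ≤ p) :
    IsGreatest (pathWeight S A 0 p '' admissibleTuples 0 p) 0 := by
  have hzero : ∀ t ∈ admissibleTuples 0 p, pathWeight S A 0 p t = 0 := by
    rintro t ⟨-, -, hlast : t 0 = p⟩
    simp [pathWeight, hlast]
  have hconst : (fun _ => p) ∈ admissibleTuples 0 p := ⟨monotone_const, hp, rfl⟩
  exact ⟨⟨_, hconst, hzero _ hconst⟩, by rintro _ ⟨t, ht, rfl⟩; exact (hzero t ht).le⟩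

lemma isGreatest_pathWeight_succ {m p : ℕ} (hp : 1 ≤ p) {g : ℕ → ℝ}
    (hg : ∀ j ∈ Icc 1 p, IsGreatest (pathWeight S A m j '' admissibleTuples m j) (g j)) :
    IsGreatest (pathWeight S A (m + 1) p '' admissibleTuples (m + 1) p)
      ((Icc 1 p).sup' (nonempty_Icc.mpr hp) fun j => g j + stageWeight S A (m + 1) j p) := by
  constructor
  · obtain ⟨j, hj, hsup⟩ := exists_mem_eq_sup' (nonempty_Icc.mpr hp)
      fun j => g j + stageWeight S A (m + 1) j p
    obtain ⟨t, ht, hgt⟩ := (hg j hj).1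
    refine ⟨Fin.snoc t p, snoc_mem_admissibleTuples ht (mem_Icc.mp hj).2, ?_⟩
    rw [hsup, pathWeight_snoc ht (mem_Icc.mp hj).2, hgt]
  · rintro _ ⟨t, ht, rfl⟩
    set j := t (Fin.last m).castSucc
    have hj : j ∈ Icc 1 p :=
      mem_Icc.mpr ⟨ht.2.1.trans (ht.1 (Fin.zero_le _)), ht.2.2 ▸ ht.1 (Fin.le_last _)⟩
    have hinit := init_mem_admissibleTuples ht
    calc pathWeight S A (m + 1) p t
        = pathWeight S A m j (Fin.init t) + stageWeight S A (m + 1) j p := by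
          rw [← pathWeight_snoc hinit (mem_Icc.mp hj).2, ← ht.2.2, Fin.snoc_init_self]
      _ ≤ g j + stageWeight S A (m + 1) j p := by
          gcongr; exact (hg j hj).2 ⟨_, hinit, rfl⟩
      _ ≤ _ := le_sup' (fun j => g j + stageWeight S A (m + 1) j p) hj

end PathWeight

section Sojourn

variable {m : ℕ} {A : ℕ → ℝ} {S : ℕ → ℕ → ℝ} {D : ℕ → ℕ → ℝ} {τ : ℕ → ℕ → ℕ → ℝ}

lemma tau_succ_eq_sum_add_sum_sub (hτ1 : ∀ l p, τ 1 l p = ∑ k ∈ Icc l p, A k)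
    (hτrec : ∀ i ∈ Icc 1 m, ∀ l p : ℕ, 2 ≤ l → l ≤ p + 1 →
      τ (i + 1) l p = τ i l p + D i p - D i (l - 1))
    {i j p : ℕ} (hi : i ≤ m) (hj : 1 ≤ j) (hjp : j ≤ p) :
    τ (i + 1) (j + 1) p = ∑ k ∈ Icc (j + 1) p, A k + ∑ r ∈ Icc 1 i, (D r p - D r j) := by
  induction i with
  | zero => simp [hτ1]
  | succ i ih =>
    rw [hτrec (i + 1) (mem_Icc.mpr ⟨by omega, hi⟩) (j + 1) p (by omega) (by omega),
      ih (by omega), Nat.add_sub_cancel, sum_Icc_succ_top (by omega)]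
    ring

lemma sum_sojourn_succ_eq_sup' (hτ1 : ∀ l p, τ 1 l p = ∑ k ∈ Icc l p, A k)
    (hD : ∀ i ∈ Icc 1 m, ∀ p : ℕ, ∀ hp : 1 ≤ p,
      D i p = (Icc 1 p).sup' (nonempty_Icc.mpr hp)
        (fun j => (∑ k ∈ Icc j p, (S i k + S (i + 1) k)) - τ i (j + 1) p))
    (hτrec : ∀ i ∈ Icc 1 m, ∀ l p : ℕ, 2 ≤ l → l ≤ p + 1 →
      τ (i + 1) l p = τ i l p + D i p - D i (l - 1))
    {i p : ℕ} (hi : i + 1 ≤ m) (hp : 1 ≤ p) :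
    ∑ r ∈ Icc 1 (i + 1), D r p =
      (Icc 1 p).sup' (nonempty_Icc.mpr hp)
        fun j => ∑ r ∈ Icc 1 i, D r j + stageWeight S A (i + 1) j p := by
  rw [sum_Icc_succ_top (by omega), hD (i + 1) (mem_Icc.mpr ⟨by omega, hi⟩) p hp, add_sup']
  refine sup'_congr _ rfl fun j hj => ?_
  rw [tau_succ_eq_sum_add_sum_sub hτ1 hτrec (by omega) (mem_Icc.mp hj).1 (mem_Icc.mp hj).2,
    sum_sub_distrib, stageWeight]
  ring

end Sojourn

theorem sum_sojourn_nonrecursive_general (m n : ℕ) (hn : 1 ≤ n)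
    (A : ℕ → ℝ) (S : ℕ → ℕ → ℝ) (D : ℕ → ℕ → ℝ) (τ : ℕ → ℕ → ℕ → ℝ)
    (hτ1 : ∀ l p, τ 1 l p = ∑ k ∈ Finset.Icc l p, A k)
    (hD : ∀ i ∈ Finset.Icc 1 m, ∀ p : ℕ, ∀ hp : 1 ≤ p,
      D i p = (Finset.Icc 1 p).sup' (Finset.nonempty_Icc.mpr hp)
        (fun j => (∑ k ∈ Finset.Icc j p, (S i k + S (i + 1) k)) - τ i (j + 1) p))
    (hτrec : ∀ i ∈ Finset.Icc 1 m, ∀ l p : ℕ, 2 ≤ l → l ≤ p + 1 →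
      τ (i + 1) l p = τ i l p + D i p - D i (l - 1)) :
    ∑ i ∈ Finset.Icc 1 m, D i n =
      sSup {x : ℝ | ∃ j : Fin (m + 1) → ℕ, Monotone j ∧ 1 ≤ j 0 ∧ j (Fin.last m) = n ∧
        x = (∑ i : Fin m, ∑ k ∈ Finset.Icc (j i.castSucc) (j i.succ),
              (S (i.val + 1) k + S (i.val + 2) k))
          - ∑ k ∈ Finset.Icc (j 0 + 1) n, A k} := by
  have hmax : ∀ i ≤ m, ∀ p, 1 ≤ p →
      IsGreatest (pathWeight S A i p '' admissibleTuples i p) (∑ r ∈ Icc 1 i, D r p) := by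
    intro i hi
    induction i with
    | zero => intro p hp; simpa using isGreatest_pathWeight_zero hp
    | succ i ih =>
      intro p hp
      rw [sum_sojourn_succ_eq_sup' hτ1 hD hτrec hi hp]
      exact isGreatest_pathWeight_succ hp fun j hj => ih (by omega) j (mem_Icc.mp hj).1
  rw [← (hmax m le_rfl n hn).csSup_eq]
  congr 1
  ext x
  exact ⟨fun ⟨j, ⟨hmono, h0, hlast⟩, hx⟩ => ⟨j, hmono, h0, hlast, hx.symm⟩,
    fun ⟨j, hmono, h0, hlast, hx⟩ => ⟨j, ⟨hmono, h0, hlast⟩, hx.symm⟩⟩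

/-- **Non-recursive expression for the sum of two-hop sojourn times** (the telescoping
step in the proof of Theorem 11): with inter-arrival times `A k` at the source,
service times `S i k` of message `k` at node `i`, cumulative inter-arrival times
`τ i l p` at node `i` (determined recursively from the departure process of node
`i - 1`), and two-hop sojourn times `D i p` given by Lindley's formula, one has
`Σ_{i=1}^m D i n = max_{1 ≤ j₁ ≤ ⋯ ≤ j_m ≤ j_{m+1} = n}
  (Σ_{i=1}^m Σ_{k=j_i}^{j_{i+1}} (S i k + S (i+1) k) - Σ_{k=j₁+1}^n A k)`. -/
theorem sum_sojourn_nonrecursive (m n : ℕ) (hm : 1 ≤ m) (hn : 1 ≤ n)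
    (A : ℕ → ℝ) (S : ℕ → ℕ → ℝ) (D : ℕ → ℕ → ℝ) (τ : ℕ → ℕ → ℕ → ℝ)
    (hτ1 : ∀ l p, τ 1 l p = ∑ k ∈ Finset.Icc l p, A k)
    (hD0 : ∀ i ∈ Finset.Icc 1 m, D i 0 = 0)
    (hD : ∀ i ∈ Finset.Icc 1 m, ∀ p : ℕ, ∀ hp : 1 ≤ p,
      D i p = (Finset.Icc 1 p).sup' (Finset.nonempty_Icc.mpr hp)
        (fun j => (∑ k ∈ Finset.Icc j p, (S i k + S (i + 1) k)) - τ i (j + 1) p))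
    (hτrec : ∀ i ∈ Finset.Icc 1 m, ∀ l p : ℕ, 2 ≤ l → l ≤ p + 1 →
      τ (i + 1) l p = τ i l p + D i p - D i (l - 1)) :
    ∑ i ∈ Finset.Icc 1 m, D i n =
      sSup {x : ℝ | ∃ j : Fin (m + 1) → ℕ, Monotone j ∧ 1 ≤ j 0 ∧ j (Fin.last m) = n ∧
        x = (∑ i : Fin m, ∑ k ∈ Finset.Icc (j i.castSucc) (j i.succ),
              (S (i.val + 1) k + S (i.val + 2) k))
          - ∑ k ∈ Finset.Icc (j 0 + 1) n, A k} :=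
  sum_sojourn_nonrecursive_general m n hn A S D τ hτ1 hD hτrec
end
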